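/- Assume there exists c ∈ ℕ^r with Ḡ(c) ⊆ O (a conductor). Then for every ℓ ∈ ℕ^r there exists a unique maximal ℓ* ∈ ℕ^r with F(ℓ*) = F(ℓ); that is, there exists ℓ* with F(ℓ*) = F(ℓ) such that every ℓ' ∈ ℕ^r with F(ℓ') = F(ℓ) satisfies ℓ' ≤ ℓ*. In particular F(ℓ') = F(ℓ) for every ℓ ≤ ℓ' ≤ ℓ*. -/

import Mathlib

/-- `Gbar r ℓ` is the subspace of `r`-tuples of power series whose `i`-th component has
order at least `ℓ i`, for every `i`. -/
noncomputable def Gbar (r : ℕ) (ℓ : Fin r → ℕ) : Submodule ℂ (Fin r → PowerSeries ℂ) where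
  carrier := {f | ∀ i : Fin r, (ℓ i : ℕ∞) ≤ (f i).order}
  zero_mem' := by
    intro i
    simp [PowerSeries.order_zero]
  add_mem' := by
    intro a b ha hb i
    refine le_trans (le_min (ha i) (hb i)) ?_
    simpa using PowerSeries.min_order_le_order_add (a i) (b i)
  smul_mem' := by
    intro c f hf i
    refine PowerSeries.le_order _ _ ?_
    intro n hn
    have hlt : (n : ℕ∞) < ((f : Fin r → PowerSeries ℂ) i).order := lt_of_lt_of_le hn (hf i)
    have : (PowerSeries.coeff (R := ℂ) n) ((c • f) i) = c • (PowerSeries.coeff (R := ℂ) n) (f i) := by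
      simp
    rw [this, PowerSeries.coeff_of_lt_order n hlt, smul_zero]

/-- `F O ℓ = O ∩ Ḡ(ℓ)`, the valuation filtration of the subspace `O`. -/
noncomputable def Ffil (r : ℕ) (O : Submodule ℂ (Fin r → PowerSeries ℂ)) (ℓ : Fin r → ℕ) :
    Submodule ℂ (Fin r → PowerSeries ℂ) :=
  O ⊓ Gbar r ℓ

/-- `hfun O ℓ = dim_ℂ O / (O ∩ Ḡ(ℓ))`, the Hilbert function of the filtration. -/
noncomputable def hfun (r : ℕ) (O : Submodule ℂ (Fin r → PowerSeries ℂ)) (ℓ : Fin r → ℕ) : ℕ :=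
  Module.finrank ℂ (O ⧸ (Gbar r ℓ).comap O.subtype)

/-- `hbarfun O ℓ = dim_ℂ V / (Ḡ(ℓ) + O)`. -/
noncomputable def hbarfun (r : ℕ) (O : Submodule ℂ (Fin r → PowerSeries ℂ)) (ℓ : Fin r → ℕ) : ℕ :=
  Module.finrank ℂ ((Fin r → PowerSeries ℂ) ⧸ (Gbar r ℓ ⊔ O))

/-- `eN i` is the `i`-th standard basis vector of `ℕ^r`. -/
def eN {r : ℕ} (i : Fin r) : Fin r → ℕ := fun j => if j = i then 1 else 0

/-!
The set `S = {ℓ' | F(ℓ') = F(ℓ)}` is closed under componentwise maxima, because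
`Ḡ(ℓ₁ ⊔ ℓ₂) = Ḡ(ℓ₁) ∩ Ḡ(ℓ₂)`. It is also bounded by `ℓ ⊔ c`: for `m = max (ℓ i) (c i)` the
monomial `X ^ m` in the `i`-th slot lies in `Ḡ(c) ⊆ O` and in `Ḡ(ℓ)`, hence in `F(ℓ) = F(ℓ')`, which
forces `ℓ' i ≤ m`. A finite, nonempty, sup-closed set contains its supremum, which is `ℓ*`.
-/

lemma Gbar_antitone (r : ℕ) : Antitone (Gbar r) :=
  fun _ _ h _ hf i => le_trans (by exact_mod_cast h i) (hf i)

lemma Gbar_sup (r : ℕ) (ℓ₁ ℓ₂ : Fin r → ℕ) :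
    Gbar r (ℓ₁ ⊔ ℓ₂) = Gbar r ℓ₁ ⊓ Gbar r ℓ₂ := by
  ext f
  change (∀ i, _) ↔ (∀ i, _) ∧ (∀ i, _)
  simp only [Pi.sup_apply, Nat.mono_cast.map_max, max_le_iff, forall_and]

lemma single_X_pow_mem_Gbar_iff (r : ℕ) (ℓ : Fin r → ℕ) (i : Fin r) (m : ℕ) :
    Pi.single i (PowerSeries.X ^ m : PowerSeries ℂ) ∈ Gbar r ℓ ↔ ℓ i ≤ m := by
  refine ⟨fun h => by simpa using h i, fun h j => ?_⟩
  rcases eq_or_ne j i with rfl | hj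
  · simpa using h
  · simp [Pi.single_eq_of_ne hj]

lemma Ffil_antitone (r : ℕ) (O : Submodule ℂ (Fin r → PowerSeries ℂ)) : Antitone (Ffil r O) :=
  fun _ _ h => inf_le_inf_left O (Gbar_antitone r h)

lemma Ffil_sup (r : ℕ) (O : Submodule ℂ (Fin r → PowerSeries ℂ)) (ℓ₁ ℓ₂ : Fin r → ℕ) :
    Ffil r O (ℓ₁ ⊔ ℓ₂) = Ffil r O ℓ₁ ⊓ Ffil r O ℓ₂ := by
  rw [Ffil, Ffil, Ffil, Gbar_sup, inf_inf_distrib_left]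

lemma supClosed_setOf_Ffil_eq (r : ℕ) (O : Submodule ℂ (Fin r → PowerSeries ℂ))
    (ℓ : Fin r → ℕ) : SupClosed {ℓ' | Ffil r O ℓ' = Ffil r O ℓ} :=
  fun a (ha : _ = _) b (hb : _ = _) => show _ = _ by rw [Ffil_sup, ha, hb, inf_idem]

lemma le_sup_of_Ffil_le {r : ℕ} {O : Submodule ℂ (Fin r → PowerSeries ℂ)} {c : Fin r → ℕ}
    (hcond : Gbar r c ≤ O) {ℓ ℓ' : Fin r → ℕ} (h : Ffil r O ℓ ≤ Ffil r O ℓ') : ℓ' ≤ ℓ ⊔ c := by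
  intro i
  have hmem : Pi.single i (PowerSeries.X ^ (ℓ ⊔ c) i : PowerSeries ℂ) ∈ Ffil r O ℓ :=
    ⟨hcond ((single_X_pow_mem_Gbar_iff r c i _).2 le_sup_right),
      (single_X_pow_mem_Gbar_iff r ℓ i _).2 le_sup_left⟩
  exact (single_X_pow_mem_Gbar_iff r ℓ' i _).1 (h hmem).2

theorem statement12_general (r : ℕ) (O : Submodule ℂ (Fin r → PowerSeries ℂ))
    (c : Fin r → ℕ) (hcond : Gbar r c ≤ O) (ℓ : Fin r → ℕ) :
    ∃ ℓstar : Fin r → ℕ,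
      Ffil r O ℓstar = Ffil r O ℓ ∧
      (∀ ℓ' : Fin r → ℕ, Ffil r O ℓ' = Ffil r O ℓ → ℓ' ≤ ℓstar) ∧
      (∀ ℓ' : Fin r → ℕ, ℓ ≤ ℓ' → ℓ' ≤ ℓstar → Ffil r O ℓ' = Ffil r O ℓ) := by
  set S : Set (Fin r → ℕ) := {ℓ' | Ffil r O ℓ' = Ffil r O ℓ}
  have hS_finite : S.Finite :=
    (Set.finite_Iic (ℓ ⊔ c)).subset fun ℓ' h => le_sup_of_Ffil_le hcond h.ge
  have hS_le : ∀ ℓ' ∈ S, ℓ' ≤ sSup S := fun ℓ' h => le_csSup hS_finite.bddAbove h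
  have hstar : sSup S ∈ S :=
    (supClosed_setOf_Ffil_eq r O ℓ).sSup_mem_of_nonempty hS_finite ⟨ℓ, rfl⟩ subset_rfl
  refine ⟨sSup S, hstar, hS_le, fun ℓ' h₁ h₂ => le_antisymm ?_ ?_⟩
  · exact Ffil_antitone r O h₁
  · exact hstar.symm.le.trans (Ffil_antitone r O h₂)

/-- assuming a conductor `c` with `Ḡ(c) ⊆ O`, every `ℓ ∈ ℕ^r` admits a unique
maximal `ℓ*` with `F(ℓ*) = F(ℓ)`; in particular `F(ℓ') = F(ℓ)` for all `ℓ ≤ ℓ' ≤ ℓ*`. -/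
theorem statement12 (r : ℕ) (hr : 1 ≤ r) (O : Submodule ℂ (Fin r → PowerSeries ℂ))
    (c : Fin r → ℕ) (hcond : Gbar r c ≤ O) (ℓ : Fin r → ℕ) :
    ∃ ℓstar : Fin r → ℕ,
      Ffil r O ℓstar = Ffil r O ℓ ∧
      (∀ ℓ' : Fin r → ℕ, Ffil r O ℓ' = Ffil r O ℓ → ℓ' ≤ ℓstar) ∧
      (∀ ℓ' : Fin r → ℕ, ℓ ≤ ℓ' → ℓ' ≤ ℓstar → Ffil r O ℓ' = Ffil r O ℓ) :=
  statement12_general r O c hcond ℓ
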